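/- Each of the three formulas T(x), F(x), N(x) is an extensional 1-isolator for S5[Con], and every extensional 1-isolator for S5[Con] is S5[Con]-equivalent to exactly one of these three formulas. -/

import Mathlib

namespace KripkeModal

/-- Formulas of the modal language `L_□`: atoms `T(x)`, `F(x)` for variables
`x : ℕ`, negation, conjunction, and box. -/
inductive Fml : Type
  | tt : ℕ → Fml   -- T(x)
  | ff : ℕ → Fml   -- F(x)
  | neg : Fml → Fml
  | and : Fml → Fml → Fml
  | box : Fml → Fml
deriving DecidableEq

namespace Fml

/-- Material implication, defined from `¬, ∧`. -/
def imp (φ ψ : Fml) : Fml := neg (and φ (neg ψ))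

/-- Disjunction, defined from `¬, ∧`. -/
def or (φ ψ : Fml) : Fml := neg (and (neg φ) (neg ψ))

/-- Biconditional. -/
def iff (φ ψ : Fml) : Fml := and (imp φ ψ) (imp ψ φ)

/-- Diamond: `◇φ := ¬□¬φ`. -/
def dia (φ : Fml) : Fml := neg (box (neg φ))

/-- `N(x) := ¬T(x) ∧ ¬F(x)`. -/
def Nf (x : ℕ) : Fml := and (neg (tt x)) (neg (ff x))

/-- A fixed contradiction. -/
def bot : Fml := and (tt 0) (neg (tt 0))

end Fml

open Fml

/-- Evaluate a formula propositionally under a valuation `v` of the "atoms":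
the atomic formulas `T(x)`, `F(x)` and all boxed formulas are treated as
propositional atoms. -/
def evalProp (v : Fml → Bool) : Fml → Bool
  | Fml.neg φ => !(evalProp v φ)
  | Fml.and φ ψ => evalProp v φ && evalProp v ψ
  | φ => v φ

/-- A formula is a substitution instance of a classical propositional tautology
iff it evaluates to true under every propositional valuation of its atoms. -/
def Tautology (φ : Fml) : Prop := ∀ v : Fml → Bool, evalProp v φ = true

/-- Provability in the modal system `S5[Ax]`: the smallest set of formulas
containing all substitution instances of propositional tautologies, all
instances of K, T and 5, all formulas in `Ax`, closed under modus ponens and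
necessitation.  Taking `Ax = ∅` gives `S5` itself. -/
inductive Prv (Ax : Set Fml) : Fml → Prop
  | taut {φ} : Tautology φ → Prv Ax φ
  | axK (A B : Fml) : Prv Ax (imp (box (imp A B)) (imp (box A) (box B)))
  | axT (A : Fml) : Prv Ax (imp (box A) A)
  | ax5 (A : Fml) : Prv Ax (imp (dia A) (box (dia A)))
  | axm {φ} : φ ∈ Ax → Prv Ax φ
  | mp {A B} : Prv Ax (imp A B) → Prv Ax A → Prv Ax B
  | nec {A} : Prv Ax A → Prv Ax (box A)

/-- A system is consistent if it does not prove a contradiction. -/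
def Consistent (Ax : Set Fml) : Prop := ¬ Prv Ax Fml.bot

/-- The axiom schema `Con`: `¬(T(x) ∧ F(x))`. -/
def ConAx : Set Fml := { φ | ∃ x : ℕ, φ = neg (and (tt x) (ff x)) }

/-- The axiom schema `Ground`: `(◇T(x) ∧ ◇F(x)) → ◇N(x)`. -/
def GroundAx : Set Fml :=
  { φ | ∃ x : ℕ, φ = imp (and (dia (tt x)) (dia (ff x))) (dia (Nf x)) }

/-- Conjunction of a list of formulas (empty conjunction is `¬⊥`). -/
def bigAnd : List Fml → Fml
  | [] => Fml.neg Fml.bot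
  | [φ] => φ
  | φ :: ψ :: rest => Fml.and φ (bigAnd (ψ :: rest))

/-- Disjunction of a list of formulas (the empty disjunction is the fixed
contradiction `⊥`). -/
def bigOr : List Fml → Fml
  | [] => Fml.bot
  | [φ] => φ
  | φ :: ψ :: rest => Fml.or φ (bigOr (ψ :: rest))

/-- The axiom schema `Min_n`: all instances
`(◇N(x_1) ∧ … ∧ ◇N(x_n)) → ◇(N(x_1) ∧ … ∧ N(x_n))` obtained by substituting
arbitrary (not necessarily distinct) variables for `x_1, …, x_n`. -/
def MinAx (n : ℕ) : Set Fml :=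
  { φ | ∃ l : List ℕ, l.length = n ∧
      φ = imp (bigAnd (l.map (fun x => dia (Nf x)))) (dia (bigAnd (l.map Nf))) }

/-- A formula is extensional if it contains no `□`. -/
def Extensional : Fml → Prop
  | tt _ => True
  | ff _ => True
  | Fml.neg φ => Extensional φ
  | Fml.and φ ψ => Extensional φ ∧ Extensional ψ
  | box _ => False

/-- A formula is intensional if every atomic subformula occurs within the
scope of a `□`. -/
def Intensional : Fml → Prop
  | tt _ => False
  | ff _ => False
  | Fml.neg φ => Intensional φ
  | Fml.and φ ψ => Intensional φ ∧ Intensional ψ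
  | box _ => True

/-- The set of variables occurring in a formula. -/
def vars : Fml → Set ℕ
  | tt x => {x}
  | ff x => {x}
  | Fml.neg φ => vars φ
  | Fml.and φ ψ => vars φ ∪ vars ψ
  | box φ => vars φ

/-- An `n`-formula: one whose atoms use only the variables `x_1, …, x_n`. -/
def IsNFormula (n : ℕ) (φ : Fml) : Prop := vars φ ⊆ {x | 1 ≤ x ∧ x ≤ n}

/-- A 1-formula: one whose atoms use only the single variable `x_1`. -/
abbrev Is1Formula (φ : Fml) : Prop := IsNFormula 1 φ

/-- `φ` is `Γ`-maximal for the system `S5[Ax]`. -/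
def GammaMaximal (Ax : Set Fml) (Γ : Set Fml) (φ : Fml) : Prop :=
  Consistent (Ax ∪ {φ}) ∧ φ ∈ Γ ∧
    ∀ ψ ∈ Γ, Prv Ax (imp φ ψ) ∨ Prv Ax (imp φ (neg ψ))

/-- Extensional `n`-isolators for `S5[Ax]`. -/
def ExtIsolator (n : ℕ) (Ax : Set Fml) (φ : Fml) : Prop :=
  GammaMaximal Ax {ψ | Extensional ψ ∧ IsNFormula n ψ} φ

/-- Intensional `n`-isolators for `S5[Ax]`. -/
def IntIsolator (n : ℕ) (Ax : Set Fml) (φ : Fml) : Prop :=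
  GammaMaximal Ax {ψ | Intensional ψ ∧ IsNFormula n ψ} φ

/-- An `n`-isolator for `S5[Ax]`: a consistent conjunction `ε ∧ ι` of an
extensional `n`-isolator and an intensional `n`-isolator. -/
def Isolator (n : ℕ) (Ax : Set Fml) (φ : Fml) : Prop :=
  ∃ ε ι, ExtIsolator n Ax ε ∧ IntIsolator n Ax ι ∧
    φ = Fml.and ε ι ∧ Consistent (Ax ∪ {φ})

/-- Satisfaction in a model `(W, V)` (with `V = (V1, V2)`) at a world `w`. -/
def Sat {W : Type*} (V1 V2 : ℕ → Set W) : W → Fml → Prop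
  | w, tt x => w ∈ V1 x
  | w, ff x => w ∈ V2 x
  | w, Fml.neg φ => ¬ Sat V1 V2 w φ
  | w, Fml.and φ ψ => Sat V1 V2 w φ ∧ Sat V1 V2 w ψ
  | _, box φ => ∀ v, Sat V1 V2 v φ

/-- The variable assignment satisfies the `Con` constraint. -/
def ConC {W : Type*} (V1 V2 : ℕ → Set W) : Prop := ∀ x, V1 x ∩ V2 x = ∅

/-- The variable assignment satisfies the `Ground` constraint. -/
def GroundC {W : Type*} (V1 V2 : ℕ → Set W) : Prop :=
  ∀ x, (V1 x).Nonempty → (V2 x).Nonempty → ((V1 x ∪ V2 x)ᶜ : Set W).Nonempty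

/-- The variable assignment satisfies the `Min` constraint. -/
def MinC {W : Type*} (V1 V2 : ℕ → Set W) : Prop :=
  ∀ l : List ℕ, l ≠ [] → (∀ x ∈ l, ((V1 x ∪ V2 x)ᶜ : Set W).Nonempty) →
    (⋂ x ∈ l, ((V1 x ∪ V2 x)ᶜ : Set W)).Nonempty

/-- The prime conditions for a subset `S` of the tensor `[3]^n`, realized as
`Fin n → Fin 3` where the value `0` stands for the layer `T`, `1` for `F`,
and `2` for `N` (i.e. `1, 2, 3` in the paper's numbering). -/
def PrimeConditions (n : ℕ) (S : Set (Fin n → Fin 3)) : Prop :=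
  S.Nonempty ∧
  (∀ j : Fin n, (S ∩ {a | a j = 0}).Nonempty → (S ∩ {a | a j = 1}).Nonempty →
      (S ∩ {a | a j = 2}).Nonempty) ∧
  ∀ J : Set (Fin n), J.Nonempty →
    (∀ j ∈ J, (S ∩ {a | a j = 2}).Nonempty) →
    (S ∩ ⋂ j ∈ J, {a | a j = 2}).Nonempty

/-- `χ_1 = T`, `χ_2 = F`, `χ_3 = N` (with `Fin 3` values `0, 1, 2`). -/
def chi (k : Fin 3) (x : ℕ) : Fml :=
  if k = 0 then tt x else if k = 1 then ff x else Nf x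

/-- The extensional `n`-isolator `φ_a = χ_{a_1}(x_1) ∧ … ∧ χ_{a_n}(x_n)`
associated with a tuple `a ∈ [3]^n`. -/
def tupleFml {n : ℕ} (a : Fin n → Fin 3) : Fml :=
  bigAnd ((List.finRange n).map (fun i => chi (a i) (i.1 + 1)))

open Classical in
/-- The pre-`n`-isolator of `S ⊆ [3]^n`:
`⋀_{a ∈ S} ◇φ_a ∧ ⋀_{a ∉ S} ¬◇φ_a`. -/
noncomputable def preIsolator (n : ℕ) (S : Set (Fin n → Fin 3)) : Fml :=
  bigAnd (((Finset.univ : Finset (Fin n → Fin 3)).toList).map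
    (fun a => if a ∈ S then dia (tupleFml a) else Fml.neg (dia (tupleFml a))))

/-!
An extensional formula in the single variable `x` is a Boolean combination of `T(x)` and
`F(x)`, and `Con` excludes one of the four valuations of these two atoms; the other three are
the states `T`, `F`, `N`. So `S5[Con]` proves such a formula iff it holds in the three one-world
models, one per state: provability follows from the tautology `Con(x) → φ`, and the converse is
soundness. Up to `S5[Con]`-equivalence an extensional 1-formula is therefore the set of states
where it holds, the consistent ones are the nonempty sets, and the maximal ones are the
singletons, i.e. the formulas equivalent to `T(x)`, `F(x)` or `N(x)`.
-/

@[simp] lemma evalProp_neg (v : Fml → Bool) (φ : Fml) :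
    evalProp v (Fml.neg φ) = !evalProp v φ := rfl

@[simp] lemma evalProp_and (v : Fml → Bool) (φ ψ : Fml) :
    evalProp v (Fml.and φ ψ) = (evalProp v φ && evalProp v ψ) := rfl

lemma evalProp_congr {φ : Fml} (hext : Extensional φ) {v v' : Fml → Bool}
    (h : ∀ x ∈ vars φ, v (tt x) = v' (tt x) ∧ v (ff x) = v' (ff x)) :
    evalProp v φ = evalProp v' φ := by
  induction φ with
  | tt x => exact (h x rfl).1
  | ff x => exact (h x rfl).2
  | neg φ ih => simp only [evalProp_neg, ih hext h]
  | and φ ψ ih₁ ih₂ =>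
    simp only [evalProp_and, ih₁ hext.1 fun x hx => h x (Or.inl hx),
      ih₂ hext.2 fun x hx => h x (Or.inr hx)]
  | box φ _ => exact hext.elim

section Soundness

variable {W : Type*} (V1 V2 : ℕ → Set W)

lemma evalProp_eq_true_iff_sat {v : Fml → Bool} {w : W}
    (hv : ∀ ψ, v ψ = true ↔ Sat V1 V2 w ψ) (φ : Fml) : evalProp v φ = true ↔ Sat V1 V2 w φ := by
  induction φ with
  | neg φ ih => simp [Sat, ← ih]
  | and φ ψ ih₁ ih₂ => simp [Sat, ← ih₁, ← ih₂]
  | _ => exact hv _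

lemma sat_imp (w : W) (φ ψ : Fml) :
    Sat V1 V2 w (imp φ ψ) ↔ (Sat V1 V2 w φ → Sat V1 V2 w ψ) := by
  simp [Fml.imp, Sat]

open Classical in
theorem Prv.sound {Ax : Set Fml} {φ : Fml} (h : Prv Ax φ)
    (hAx : ∀ ψ ∈ Ax, ∀ w, Sat V1 V2 w ψ) (w : W) : Sat V1 V2 w φ := by
  induction h generalizing w with
  | taut ht => exact (evalProp_eq_true_iff_sat V1 V2 (fun _ => decide_eq_true_iff) _).1 (ht _)
  | axK A B => simp only [sat_imp, Sat]; exact fun hAB hA v => hAB v (hA v)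
  | axT A => simp only [sat_imp, Sat]; exact fun hA => hA w
  | ax5 A => simp only [sat_imp, Fml.dia, Sat]; exact fun hA _ => hA
  | axm hmem => exact hAx _ hmem w
  | mp _ _ ih₁ ih₂ => exact (sat_imp V1 V2 w _ _).1 (ih₁ w) (ih₂ w)
  | nec _ ih => exact ih

end Soundness

lemma Prv.mono {Ax Ax' : Set Fml} (hsub : Ax ⊆ Ax') {φ : Fml} (h : Prv Ax φ) : Prv Ax' φ := by
  induction h with
  | taut ht => exact Prv.taut ht
  | axK A B => exact Prv.axK A B
  | axT A => exact Prv.axT A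
  | ax5 A => exact Prv.ax5 A
  | axm hmem => exact Prv.axm (hsub hmem)
  | mp _ _ ih₁ ih₂ => exact ih₁.mp ih₂
  | nec _ ih => exact ih.nec

lemma not_consistent_union_of_prv_neg {Ax : Set Fml} {φ : Fml} (h : Prv Ax (Fml.neg φ)) :
    ¬ Consistent (Ax ∪ {φ}) := by
  refine not_not_intro <| ((Prv.taut fun v => ?_).mp (h.mono Set.subset_union_left)).mp
    (Prv.axm (Set.mem_union_right _ rfl))
  simp only [Fml.imp, Fml.bot, evalProp_neg, evalProp_and]
  cases evalProp v φ <;> cases evalProp v (tt 0) <;> rfl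

/-- Truth in the one-world model in which every variable is in state `k`, numbered as in `chi`:
`0 = T`, `1 = F`, `2 = N`. -/
def HoldsIn (k : Fin 3) : Fml → Prop :=
  Sat (fun _ => {_u : Unit | k = 0}) (fun _ => {_u | k = 1}) ()

lemma holdsIn_of_prv {Ax : Set Fml} {φ : Fml} {k : Fin 3} (h : Prv Ax φ)
    (hAx : ∀ ψ ∈ Ax, HoldsIn k ψ) : HoldsIn k φ :=
  h.sound _ _ (fun ψ hψ _ => hAx ψ hψ) ()

lemma holdsIn_of_mem_conAx {ψ : Fml} (k : Fin 3) (hψ : ψ ∈ ConAx) : HoldsIn k ψ := by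
  obtain ⟨x, rfl⟩ := hψ
  simp only [HoldsIn, Sat, Set.mem_ofPred_eq]
  omega

lemma holdsIn_of_prv_conAx {φ : Fml} (h : Prv ConAx φ) (k : Fin 3) : HoldsIn k φ :=
  holdsIn_of_prv h fun _ => holdsIn_of_mem_conAx k

lemma holdsIn_chi (j k : Fin 3) (x : ℕ) : HoldsIn k (chi j x) ↔ j = k := by
  fin_cases j <;> fin_cases k <;> simp [HoldsIn, chi, Nf, Sat]

lemma holdsIn_imp {k : Fin 3} {φ ψ : Fml} :
    HoldsIn k (imp φ ψ) ↔ (HoldsIn k φ → HoldsIn k ψ) :=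
  sat_imp _ _ _ _ _

lemma holdsIn_iff {k : Fin 3} {φ ψ : Fml} :
    HoldsIn k (Fml.iff φ ψ) ↔ (HoldsIn k φ ↔ HoldsIn k ψ) := by
  simp only [HoldsIn, Fml.iff, Sat, sat_imp]
  exact iff_iff_implies_and_implies.symm

lemma consistent_conAx_union_of_holdsIn {φ : Fml} {k : Fin 3} (h : HoldsIn k φ) :
    Consistent (ConAx ∪ {φ}) := by
  intro hbot
  have := holdsIn_of_prv hbot (k := k) <| by
    rintro ψ (hψ | rfl)
    exacts [holdsIn_of_mem_conAx k hψ, h]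
  simp [HoldsIn, Sat, Fml.bot] at this

theorem prv_conAx_of_forall_holdsIn {φ : Fml} {x : ℕ} (hext : Extensional φ)
    (hvars : vars φ ⊆ {x}) (h : ∀ k, HoldsIn k φ) : Prv ConAx φ := by
  classical
  refine Prv.mp (Prv.taut fun v => ?_) (Prv.axm ⟨x, rfl⟩)
  have holds_of_state (k : Fin 3) (hT : v (tt x) = true ↔ k = 0)
      (hF : v (ff x) = true ↔ k = 1) : evalProp v φ = true := by
    refine (evalProp_congr hext (v' := fun ψ => decide (HoldsIn k ψ)) ?_).trans
      ((evalProp_eq_true_iff_sat _ _ (fun _ => decide_eq_true_iff) φ).2 (h k))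
    intro y hy
    obtain rfl : y = x := hvars hy
    exact ⟨Bool.eq_iff_iff.2 (hT.trans (decide_eq_true_iff (p := HoldsIn k (tt y))).symm),
      Bool.eq_iff_iff.2 (hF.trans (decide_eq_true_iff (p := HoldsIn k (ff y))).symm)⟩
  -- the valuation of `T(x), F(x)` is that of the state `N`, `F` or `T`, or it violates `Con(x)`
  cases hT : v (tt x) <;> cases hF : v (ff x)
  · simp [Fml.imp, evalProp, hT, hF, holds_of_state 2 (by simp [hT]) (by simp [hF])]
  · simp [Fml.imp, evalProp, hT, hF, holds_of_state 1 (by simp [hT]) (by simp [hF])]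
  · simp [Fml.imp, evalProp, hT, hF, holds_of_state 0 (by simp [hT]) (by simp [hF])]
  · simp [Fml.imp, evalProp, hT, hF]

lemma extensional_chi (k : Fin 3) (x : ℕ) : Extensional (chi k x) := by
  fin_cases k <;> simp [chi, Nf, Extensional]

lemma vars_chi (k : Fin 3) (x : ℕ) : vars (chi k x) = {x} := by
  fin_cases k <;> simp [chi, Nf, vars]

lemma isNFormula_one_iff {φ : Fml} : IsNFormula 1 φ ↔ vars φ ⊆ {1} := by
  rw [IsNFormula, show {x : ℕ | 1 ≤ x ∧ x ≤ 1} = {1} from Set.ext fun x => by simp; omega]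

lemma isNFormula_one_chi (k : Fin 3) : IsNFormula 1 (chi k 1) :=
  isNFormula_one_iff.2 (vars_chi k 1).subset

section OneVariable

variable {φ : Fml} {x : ℕ} (hext : Extensional φ) (hvars : vars φ ⊆ {x})
include hext hvars

lemma prv_conAx_iff_forall_holdsIn : Prv ConAx φ ↔ ∀ k, HoldsIn k φ :=
  ⟨holdsIn_of_prv_conAx, prv_conAx_of_forall_holdsIn hext hvars⟩

lemma consistent_conAx_union_iff : Consistent (ConAx ∪ {φ}) ↔ ∃ k, HoldsIn k φ := by
  refine ⟨fun hcons => ?_, fun ⟨_, hk⟩ => consistent_conAx_union_of_holdsIn hk⟩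
  by_contra! hnone
  exact not_consistent_union_of_prv_neg (prv_conAx_of_forall_holdsIn hext hvars hnone) hcons

lemma prv_conAx_imp_chi {k : Fin 3} (hk : HoldsIn k φ) : Prv ConAx (imp (chi k x) φ) := by
  refine prv_conAx_of_forall_holdsIn ⟨extensional_chi k x, hext⟩
    (Set.union_subset (vars_chi k x).subset hvars) fun j => holdsIn_imp.2 fun hj => ?_
  rwa [← (holdsIn_chi k j x).1 hj]

lemma prv_conAx_iff_chi_iff (k : Fin 3) :
    Prv ConAx (Fml.iff φ (chi k x)) ↔ ∀ j, HoldsIn j φ ↔ j = k := by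
  rw [prv_conAx_iff_forall_holdsIn (x := x)
    (by simp [Fml.iff, Fml.imp, Extensional, hext, extensional_chi])
    (by simpa [Fml.iff, Fml.imp, vars, vars_chi] using hvars)]
  simp only [holdsIn_iff, holdsIn_chi, eq_comm]

end OneVariable

theorem extIsolator_chi (k : Fin 3) : ExtIsolator 1 ConAx (chi k 1) := by
  refine ⟨consistent_conAx_union_of_holdsIn ((holdsIn_chi k k 1).2 rfl),
    ⟨extensional_chi k 1, isNFormula_one_chi k⟩, ?_⟩
  rintro ψ ⟨hext, hψ⟩
  rw [isNFormula_one_iff] at hψ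
  by_cases hk : HoldsIn k ψ
  · exact Or.inl (prv_conAx_imp_chi hext hψ hk)
  · exact Or.inr (prv_conAx_imp_chi (φ := Fml.neg ψ) hext hψ hk)

theorem ExtIsolator.exists_holdsIn_iff_eq {φ : Fml} (hφ : ExtIsolator 1 ConAx φ) :
    ∃ k, ∀ j, HoldsIn j φ ↔ j = k := by
  obtain ⟨hcons, ⟨hext, hvars⟩, hmax⟩ := hφ
  obtain ⟨k, hk⟩ :=
    (consistent_conAx_union_iff hext (isNFormula_one_iff.1 hvars)).1 hcons
  refine ⟨k, fun j => ⟨fun hj => ?_, by rintro rfl; exact hk⟩⟩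
  rcases hmax (chi k 1) ⟨extensional_chi k 1, isNFormula_one_chi k⟩ with h | h
  · exact ((holdsIn_chi k j 1).1 (holdsIn_imp.1 (holdsIn_of_prv_conAx h j) hj)).symm
  · exact absurd ((holdsIn_chi k k 1).2 rfl) (holdsIn_imp.1 (holdsIn_of_prv_conAx h k) hk)

/-- the extensional 1-isolators for S5[Con] are, up to
S5[Con]-equivalence, exactly `T(x)`, `F(x)`, `N(x)` (with `x` the variable
`x_1`). -/
theorem ext_isolators_for_S5Con :
    (∀ φ ∈ [tt 1, ff 1, Nf 1], ExtIsolator 1 ConAx φ) ∧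
    (∀ φ : Fml, ExtIsolator 1 ConAx φ →
      ∃! ψ, ψ ∈ [tt 1, ff 1, Nf 1] ∧ Prv ConAx (Fml.iff φ ψ)) := by
  have mem_iff (ψ : Fml) : ψ ∈ [tt 1, ff 1, Nf 1] ↔ ∃ k, chi k 1 = ψ := by
    simp [Fin.exists_fin_succ, chi, eq_comm]
  refine ⟨fun φ hφ => ?_, fun φ hφ => ?_⟩
  · obtain ⟨k, rfl⟩ := (mem_iff φ).1 hφ
    exact extIsolator_chi k
  · obtain ⟨k, hk⟩ := hφ.exists_holdsIn_iff_eq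
    obtain ⟨-, ⟨hext, hφ1⟩, -⟩ := hφ
    have hequiv := prv_conAx_iff_chi_iff hext (isNFormula_one_iff.1 hφ1)
    refine ⟨chi k 1, ⟨(mem_iff _).2 ⟨k, rfl⟩, (hequiv k).2 hk⟩, ?_⟩
    rintro ψ ⟨hψ, hiff⟩
    obtain ⟨j, rfl⟩ := (mem_iff ψ).1 hψ
    rw [← ((hequiv j).1 hiff k).1 ((hk k).2 rfl)]

end KripkeModal
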